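/- arXiv:2209.05678 — 2 statements merged into one kernel-verified Lean document; each statement's English description precedes it below -/
import Mathlib

section
/- Let G be a graph and let B ∈ ℝ^{(m+3n')×(m+3n')} be the matrix of the (P1) input construction for G, B := [[0, Kᵀ],[K, A]] + k·I. If G is 3-colorable, then there exists a vector d ∈ ℝ^{m+3n'} with d ≥ 0 such that B − Diag(d) is positive semidefinite and rank(B − Diag(d)) ≤ m + 3. -/
/-!
Extend a 3-colouring of `G` to a proper 3-colouring `c` of the Peeters supergraph `G'`, and
give each edge `e` of `G''` the weight `s_e = 1` if its ends have the same colour, `s_e = 2`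
otherwise. Then `B - Diag d` is the Gram matrix `C W Cᵀ` with `C = [[S⁻¹, 0], [K, Y]]`,
`W = Diag(S, I₃)`, `S = Diag(s)` and `Y` the `3n' × 3` colour indicator matrix. Off the
diagonal `C W Cᵀ` agrees with `B`: on a nonedge of `G'` the contributions `s_e` and
`[same colour]` add up to `2`, on an edge of `G'` both vanish (the colouring is proper), and
on a pair `(v, μ), (v, ν)` only the colour term `1` is left. Its diagonal is at most
`2 Δ(G'') + 1 = k`, so `d ≥ 0`, and `C` has only `m + 3` columns.
-/

open Matrix

noncomputable section

/-- Unordered pairs of distinct vertices of `Fin N`, represented by ordered pairs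
`(i, j)` with `i < j`. -/
abbrev Pairs (N : ℕ) := {p : Fin N × Fin N // p.1 < p.2}

/-- Vertices of the Peeters supergraph: the original vertices together with, for each
unordered pair `{i,j}` of distinct vertices, four new vertices `a, b, c, d`
(encoded as `(q, 0), (q, 1), (q, 2), (q, 3)`). -/
abbrev PV (N : ℕ) := Fin N ⊕ (Pairs N × Fin 4)

/-- The generating relation for the edges of the Peeters supergraph: the original edges
together with, for each unordered pair `q = {i,j}`, the nine edges
`{i,a}, {i,b}, {a,b}, {j,c}, {j,d}, {c,d}, {a,j}, {i,d}, {b,c}`. -/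
def peetersRel (N : ℕ) (G : SimpleGraph (Fin N)) : PV N → PV N → Prop := fun x y =>
  (∃ i j : Fin N, G.Adj i j ∧ x = Sum.inl i ∧ y = Sum.inl j) ∨
  (∃ q : Pairs N,
    (x = Sum.inl q.val.1 ∧ y = Sum.inr (q, 0)) ∨
    (x = Sum.inl q.val.1 ∧ y = Sum.inr (q, 1)) ∨
    (x = Sum.inr (q, 0) ∧ y = Sum.inr (q, 1)) ∨
    (x = Sum.inl q.val.2 ∧ y = Sum.inr (q, 2)) ∨
    (x = Sum.inl q.val.2 ∧ y = Sum.inr (q, 3)) ∨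
    (x = Sum.inr (q, 2) ∧ y = Sum.inr (q, 3)) ∨
    (x = Sum.inr (q, 0) ∧ y = Sum.inl q.val.2) ∨
    (x = Sum.inl q.val.1 ∧ y = Sum.inr (q, 3)) ∨
    (x = Sum.inr (q, 1) ∧ y = Sum.inr (q, 2)))

/-- The Peeters supergraph `G'` of `G`. -/
def peetersGraph (N : ℕ) (G : SimpleGraph (Fin N)) : SimpleGraph (PV N) :=
  SimpleGraph.fromRel (peetersRel N G)

/-- Row/column indices of the `(P3)` input construction: pairs `(v, μ)` with
`v ∈ V(G')` and `μ ∈ {1,2,3}`. -/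
abbrev Idx (N : ℕ) := PV N × Fin 3

/-- The matrix `A` of the `(P3)` input construction:
`A((v,μ),(w,ν)) = 1` if `v = w` and `μ ≠ ν`, and `0` otherwise. -/
def AP3 (N : ℕ) : Matrix (Idx N) (Idx N) ℝ := fun p q =>
  if p.1 = q.1 ∧ p.2 ≠ q.2 then 1 else 0

/-- `L` fits the edge set `X` of the `(P3)` input construction, i.e. `L` vanishes on
all pairs `{(v,μ),(w,ν)}` with `{v,w} ∈ E(G')` and on all pairs `{(v,μ),(v,ν)}` with
`μ ≠ ν`. -/
def FitsX (N : ℕ) (G : SimpleGraph (Fin N)) (L : Matrix (Idx N) (Idx N) ℝ) : Prop :=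
  (∀ p q : Idx N, (peetersGraph N G).Adj p.1 q.1 → L p q = 0) ∧
  (∀ (v : PV N) (μ ν : Fin 3), μ ≠ ν → L (v, μ) (v, ν) = 0)


attribute [local instance] Classical.propDecidable

/-- The matrix `A` used in the `(P1)` and `(P2)` input constructions:
`A((v,μ),(w,ν)) = 2` if `{v,w}` is a nonedge of `G'`, `0` if `{v,w} ∈ E(G')`,
`1` if `v = w` and `μ ≠ ν`, and `0` on the diagonal. -/
def AP12 (N : ℕ) (G : SimpleGraph (Fin N)) : Matrix (Idx N) (Idx N) ℝ := fun p q =>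
  if p.1 = q.1 then (if p.2 = q.2 then 0 else 1)
  else if (peetersGraph N G).Adj p.1 q.1 then 0 else 2

/-- The graph `G''` on the `3n'` indices whose edges are the pairs `{(v,μ),(w,ν)}`
with `{v,w}` a nonedge of `G'`. -/
def Gpp (N : ℕ) (G : SimpleGraph (Fin N)) : SimpleGraph (Idx N) where
  Adj p q := p.1 ≠ q.1 ∧ ¬ (peetersGraph N G).Adj p.1 q.1
  symm := ⟨fun p q h => ⟨h.1.symm, fun ha => h.2 ha.symm⟩⟩
  loopless := ⟨fun p h => h.1 rfl⟩

/-- The edges of `G''`, indexing the first block of rows/columns of `B`. -/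
abbrev EIdx (N : ℕ) (G : SimpleGraph (Fin N)) := {e : Sym2 (Idx N) // e ∈ (Gpp N G).edgeSet}

/-- The node-edge incidence matrix `K` of `G''`. -/
def KInc (N : ℕ) (G : SimpleGraph (Fin N)) : Matrix (Idx N) (EIdx N G) ℝ := fun x e =>
  if x ∈ (e : Sym2 (Idx N)) then 1 else 0

/-- `k := 2·(maximum degree of G'') + 1`. -/
def kval (N : ℕ) (G : SimpleGraph (Fin N)) : ℕ := 2 * (Gpp N G).maxDegree + 1

/-- The matrix `B` of the `(P1)` input construction: `[[0, Kᵀ],[K, A]] + k·I`. -/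
def BP1 (N : ℕ) (G : SimpleGraph (Fin N)) :
    Matrix (EIdx N G ⊕ Idx N) (EIdx N G ⊕ Idx N) ℝ :=
  Matrix.fromBlocks 0 (KInc N G)ᵀ (KInc N G) (AP12 N G) + (kval N G : ℝ) • 1

/-- When `x ≠ y`, `-(x + y)` is the third colour, since `0 + 1 + 2 = 0` in `Fin 3`. -/
def gadgetColor (x y : Fin 3) : Fin 4 → Fin 3 :=
  if x = y then ![x + 1, x + 2, x + 1, x + 2] else ![-(x + y), y, x, -(x + y)]

lemma gadgetColor_valid (x y : Fin 3) :
    x ≠ gadgetColor x y 0 ∧ x ≠ gadgetColor x y 1 ∧ gadgetColor x y 0 ≠ gadgetColor x y 1 ∧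
    y ≠ gadgetColor x y 2 ∧ y ≠ gadgetColor x y 3 ∧ gadgetColor x y 2 ≠ gadgetColor x y 3 ∧
    gadgetColor x y 0 ≠ y ∧ x ≠ gadgetColor x y 3 ∧ gadgetColor x y 1 ≠ gadgetColor x y 2 := by
  revert x y; decide

def peetersColoring {N : ℕ} {G : SimpleGraph (Fin N)} (c : G.Coloring (Fin 3)) :
    (peetersGraph N G).Coloring (Fin 3) :=
  have valid_of_rel : ∀ u v, peetersRel N G u v →
      Sum.elim c (fun qt => gadgetColor (c qt.1.val.1) (c qt.1.val.2) qt.2) u ≠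
        Sum.elim c (fun qt => gadgetColor (c qt.1.val.1) (c qt.1.val.2) qt.2) v := by
    rintro u v (⟨i, j, hij, rfl, rfl⟩ | ⟨q, H⟩)
    · exact c.valid hij
    · have := gadgetColor_valid (c q.val.1) (c q.val.2)
      rcases H with ⟨rfl, rfl⟩ | ⟨rfl, rfl⟩ | ⟨rfl, rfl⟩ | ⟨rfl, rfl⟩ | ⟨rfl, rfl⟩ |
        ⟨rfl, rfl⟩ | ⟨rfl, rfl⟩ | ⟨rfl, rfl⟩ | ⟨rfl, rfl⟩ <;> simp_all
  SimpleGraph.Coloring.mk _ fun {u v} huv => by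
    rcases (SimpleGraph.fromRel_adj _ u v).1 huv with ⟨-, h | h⟩
    exacts [valid_of_rel u v h, (valid_of_rel v u h).symm]

theorem peetersGraph_colorable {N : ℕ} {G : SimpleGraph (Fin N)} (hG : G.Colorable 3) :
    (peetersGraph N G).Colorable 3 :=
  let ⟨c⟩ := hG
  ⟨peetersColoring c⟩

theorem Matrix.sub_diagonal_eq_of_offDiag_eq {n R : Type*} [DecidableEq n] [AddCommGroup R]
    {B M : Matrix n n R} (h : ∀ x y, x ≠ y → B x y = M x y) :
    B - diagonal (fun x => B x x - M x x) = M := by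
  ext x y
  by_cases hxy : x = y
  · subst hxy
    simp
  · simp [diagonal_apply_ne _ hxy, h x y hxy]

section EdgeSums

-- The `Fintype` instance is implicit, as in `Finset.sum_subtype`, so that these lemmas apply to
-- sums over an edge type whose instance was found by another route.
variable {V R : Type*} [DecidableEq V] (H : SimpleGraph V) {_ : Fintype H.edgeSet}

theorem SimpleGraph.sum_edgeSet_ite_mem_ite_mem [AddCommMonoid R] (f : Sym2 V → R) {p q : V}
    (hpq : p ≠ q) :
    ∑ e : H.edgeSet, (if p ∈ (e : Sym2 V) then if q ∈ (e : Sym2 V) then f e else 0 else 0) =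
      if H.Adj p q then f s(p, q) else 0 := by
  rw [Finset.sum_set_coe (f := fun e => if p ∈ e then if q ∈ e then f e else 0 else 0),
    ← SimpleGraph.edgeFinset]
  simp_rw [← ite_and, Sym2.mem_and_mem_iff hpq]
  simp only [Finset.sum_ite_eq', SimpleGraph.mem_edgeFinset, SimpleGraph.mem_edgeSet]

theorem SimpleGraph.sum_edgeSet_ite_mem_le [AddCommMonoid R] [PartialOrder R]
    [IsOrderedAddMonoid R] (f : Sym2 V → R) {c : R} (hf : ∀ e, f e ≤ c) (p : V)
    [Fintype (H.neighborSet p)] :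
    ∑ e : H.edgeSet, (if p ∈ (e : Sym2 V) then f e else 0) ≤ H.degree p • c := by
  rw [Finset.sum_set_coe (f := fun e => if p ∈ e then f e else 0), ← SimpleGraph.edgeFinset,
    ← Finset.sum_filter, ← H.incidenceFinset_eq_filter, ← H.card_incidenceFinset_eq_degree]
  exact Finset.sum_le_card_nsmul _ _ _ fun e _ => hf e

end EdgeSums

section Factorization

variable {N : ℕ} {G : SimpleGraph (Fin N)} (c : (peetersGraph N G).Coloring (Fin 3))

def edgeWeight (e : Sym2 (Idx N)) : ℝ :=
  if (e.map fun p => c p.1).IsDiag then 1 else 2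

lemma edgeWeight_mk (p q : Idx N) :
    edgeWeight c s(p, q) = if c p.1 = c q.1 then 1 else 2 := by
  simp [edgeWeight]

lemma one_le_edgeWeight (e : Sym2 (Idx N)) : 1 ≤ edgeWeight c e := by
  unfold edgeWeight; split_ifs <;> norm_num

lemma edgeWeight_le_two (e : Sym2 (Idx N)) : edgeWeight c e ≤ 2 := by
  unfold edgeWeight; split_ifs <;> norm_num

def colorIndicator : Matrix (Idx N) (Fin 3) ℝ := fun p μ => if c p.1 = μ then 1 else 0

lemma colorIndicator_mul_transpose_apply (p q : Idx N) :
    (colorIndicator c * (colorIndicator c)ᵀ) p q = if c p.1 = c q.1 then 1 else 0 := by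
  simp only [colorIndicator, mul_apply, transpose_apply, mul_ite, mul_one, mul_zero]
  simp

def lowRankPart : Matrix (EIdx N G ⊕ Idx N) (EIdx N G ⊕ Idx N) ℝ :=
  fromBlocks (diagonal fun e : EIdx N G => (edgeWeight c e)⁻¹) (KInc N G)ᵀ (KInc N G)
    (KInc N G * diagonal (fun e : EIdx N G => edgeWeight c e) * (KInc N G)ᵀ +
      colorIndicator c * (colorIndicator c)ᵀ)

def lowRankFactor : Matrix (EIdx N G ⊕ Idx N) (EIdx N G ⊕ Fin 3) ℝ :=
  fromBlocks (diagonal fun e : EIdx N G => (edgeWeight c e)⁻¹) 0 (KInc N G) (colorIndicator c)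

def factorWeights : EIdx N G ⊕ Fin 3 → ℝ := Sum.elim (fun e : EIdx N G => edgeWeight c e) 1

lemma lowRankPart_eq_mul_diagonal_mul_transpose :
    lowRankPart c = lowRankFactor c * diagonal (factorWeights c) * (lowRankFactor c)ᵀ := by
  have hw (e : EIdx N G) : edgeWeight c e ≠ 0 :=
    (zero_lt_one.trans_le (one_le_edgeWeight c e)).ne'
  rw [lowRankFactor, factorWeights, ← fromBlocks_diagonal, fromBlocks_transpose,
    fromBlocks_multiply, fromBlocks_multiply]
  simp [lowRankPart, diagonal_transpose, hw, Matrix.mul_assoc]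

theorem posSemidef_lowRankPart : (lowRankPart c).PosSemidef := by
  have hweights : (diagonal (factorWeights c)).PosSemidef := by
    refine posSemidef_diagonal_iff.2 fun x => ?_
    rcases x with e | μ
    · exact zero_le_one.trans (one_le_edgeWeight c e)
    · exact zero_le_one
  simpa [lowRankPart_eq_mul_diagonal_mul_transpose] using
    hweights.mul_mul_conjTranspose_same (lowRankFactor c)

theorem rank_lowRankPart_le : (lowRankPart c).rank ≤ Fintype.card (EIdx N G) + 3 :=
  calc (lowRankPart c).rank
      ≤ (lowRankFactor c * diagonal (factorWeights c)).rank := by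
        rw [lowRankPart_eq_mul_diagonal_mul_transpose]; exact rank_mul_le_left _ _
    _ ≤ (lowRankFactor c).rank := rank_mul_le_left _ _
    _ ≤ Fintype.card (EIdx N G ⊕ Fin 3) := rank_le_card_width _
    _ = Fintype.card (EIdx N G) + 3 := by simp

lemma KInc_mul_diagonal_mul_transpose_apply (f : Sym2 (Idx N) → ℝ) (p q : Idx N) :
    (KInc N G * diagonal (fun e : EIdx N G => f e) * (KInc N G)ᵀ) p q =
      ∑ e : EIdx N G,
        if p ∈ (e : Sym2 (Idx N)) then if q ∈ (e : Sym2 (Idx N)) then f e else 0 else 0 := by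
  rw [mul_apply]
  simp only [mul_diagonal, transpose_apply]
  refine Finset.sum_congr rfl fun e _ => ?_
  unfold KInc
  split_ifs <;> simp

lemma AP12_apply_of_ne {p q : Idx N} (hpq : p ≠ q) :
    AP12 N G p q = (KInc N G * diagonal (fun e : EIdx N G => edgeWeight c e) * (KInc N G)ᵀ +
      colorIndicator c * (colorIndicator c)ᵀ) p q := by
  rw [Matrix.add_apply, KInc_mul_diagonal_mul_transpose_apply,
    (Gpp N G).sum_edgeSet_ite_mem_ite_mem _ hpq, colorIndicator_mul_transpose_apply]
  by_cases hadj : (Gpp N G).Adj p q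
  · rw [if_pos hadj, edgeWeight_mk, AP12, if_neg hadj.1, if_neg hadj.2]
    split_ifs <;> norm_num
  · rw [if_neg hadj, zero_add, AP12]
    by_cases hv : p.1 = q.1
    · rw [if_pos hv, if_neg fun h => hpq (Prod.ext hv h), if_pos (congrArg c hv)]
    · have hadj' : (peetersGraph N G).Adj p.1 q.1 := by
        by_contra h
        exact hadj ⟨hv, h⟩
      rw [if_neg hv, if_pos hadj', if_neg (c.valid hadj')]

theorem BP1_apply_of_ne {x y : EIdx N G ⊕ Idx N} (hxy : x ≠ y) :
    BP1 N G x y = lowRankPart c x y := by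
  rw [BP1, Matrix.add_apply, Matrix.smul_apply, one_apply_ne hxy, smul_zero, add_zero]
  rcases x with e | p <;> rcases y with f | q
  · simp [lowRankPart, diagonal_apply_ne _ fun h : e = f => hxy (congrArg Sum.inl h)]
  · rfl
  · rfl
  · exact AP12_apply_of_ne c fun h => hxy (congrArg Sum.inr h)

lemma BP1_apply_self (x : EIdx N G ⊕ Idx N) : BP1 N G x x = kval N G := by
  rcases x with e | p <;> simp [BP1, AP12]

theorem lowRankPart_apply_self_le (x : EIdx N G ⊕ Idx N) : lowRankPart c x x ≤ kval N G := by
  rcases x with e | p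
  · calc lowRankPart c (.inl e) (.inl e) = (edgeWeight c e)⁻¹ := by simp [lowRankPart]
      _ ≤ 1 := inv_le_one_of_one_le₀ (one_le_edgeWeight c e)
      _ ≤ kval N G := by simp [kval]
  · calc lowRankPart c (.inr p) (.inr p)
        = (∑ e : EIdx N G, if p ∈ (e : Sym2 (Idx N)) then edgeWeight c e else 0) + 1 := by
          simp only [lowRankPart, fromBlocks_apply₂₂, Matrix.add_apply,
            KInc_mul_diagonal_mul_transpose_apply, colorIndicator_mul_transpose_apply]
          congr 1
          exact Finset.sum_congr rfl fun e _ => by split_ifs <;> rfl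
      _ ≤ (Gpp N G).degree p • 2 + 1 := by
          gcongr
          exact (Gpp N G).sum_edgeSet_ite_mem_le _ (edgeWeight_le_two c) p
      _ ≤ kval N G := by
          rw [nsmul_eq_mul, kval]
          push_cast
          linarith [(Nat.cast_le (α := ℝ)).2 ((Gpp N G).degree_le_maxDegree p)]

end Factorization

/-- If `G` is 3-colorable, then there is a nonnegative `d` with
`B − Diag(d) ⪰ 0` and `rank (B − Diag(d)) ≤ m + 3`. -/
theorem stmt11 (N : ℕ) (G : SimpleGraph (Fin N)) (hG : G.Colorable 3) :
    ∃ d : EIdx N G ⊕ Idx N → ℝ, (∀ x, 0 ≤ d x) ∧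
      (BP1 N G - Matrix.diagonal d).PosSemidef ∧
      (BP1 N G - Matrix.diagonal d).rank ≤ Fintype.card (EIdx N G) + 3 := by
  obtain ⟨c⟩ := peetersGraph_colorable hG
  have hB : BP1 N G - diagonal (fun x => BP1 N G x x - lowRankPart c x x) = lowRankPart c :=
    Matrix.sub_diagonal_eq_of_offDiag_eq fun _ _ => BP1_apply_of_ne c
  refine ⟨fun x => BP1 N G x x - lowRankPart c x x, fun x => ?_, ?_, ?_⟩
  · rw [sub_nonneg, BP1_apply_self]
    exact lowRankPart_apply_self_le c x
  · rw [hB]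
    exact posSemidef_lowRankPart c
  · rw [hB]
    exact rank_lowRankPart_le c
end
end

section
/- Let A ∈ ℝ^{n×n} be symmetric positive semidefinite with A_{ij} < 0 for all i ≠ j, and suppose rank(A) = n − 1. Then there exists a vector v ∈ ℝⁿ with all entries positive such that A·v = 0 (so the null space of A is spanned by a positive vector), and moreover no vector with all entries positive lies in the column space (range) of A. -/
open Matrix

/-!
Replacing a null vector `u` of `A` by `|u|` can only lower the quadratic form, because the
off-diagonal entries are negative; as `A ⪰ 0` and `uᵀ A u = 0`, this forces `A |u| = 0`. If some
entry of `|u|` vanished, the corresponding row of `A |u| = 0` would be a sum of nonpositive terms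
that vanishes only if `|u| = 0`, so `|u|` is positive, and it spans the one-dimensional kernel.
Finally, by symmetry `v ⬝ᵥ A x = (A v) ⬝ᵥ x = 0` for the positive null vector `v`, whereas
`v ⬝ᵥ w > 0` for every positive `w`.
-/

namespace Matrix

theorem rank_add_finrank_ker_mulVecLin {m n K : Type*} [Fintype m] [Fintype n] [Field K]
    (A : Matrix m n K) :
    A.rank + Module.finrank K (LinearMap.ker A.mulVecLin) = Fintype.card n := by
  rw [rank, LinearMap.finrank_range_add_finrank_ker, Module.finrank_fintype_fun_eq_card]

theorem IsSymm.dotProduct_mulVec_eq_zero {n R : Type*} [Fintype n] [CommSemiring R]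
    {A : Matrix n n R} (hA : A.IsSymm) {v : n → R} (hv : A *ᵥ v = 0) (x : n → R) :
    v ⬝ᵥ A *ᵥ x = 0 := by
  rw [dotProduct_mulVec, ← mulVec_transpose, hA.eq, hv, zero_dotProduct]

variable {ι : Type*} [Fintype ι] {A : Matrix ι ι ℝ}

theorem abs_dotProduct_mulVec_abs_le (hoff : ∀ i j, i ≠ j → A i j ≤ 0) (u : ι → ℝ) :
    |u| ⬝ᵥ A *ᵥ |u| ≤ u ⬝ᵥ A *ᵥ u := by
  simp only [dotProduct, mulVec, Finset.mul_sum, Pi.abs_apply]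
  refine Finset.sum_le_sum fun i _ => Finset.sum_le_sum fun j _ => ?_
  rcases eq_or_ne i j with rfl | hij
  · rw [mul_left_comm, abs_mul_abs_self, mul_left_comm]
  · rw [mul_left_comm, mul_left_comm (u i), ← abs_mul]
    exact mul_le_mul_of_nonpos_left (le_abs_self _) (hoff i j hij)

theorem PosSemidef.mulVec_abs_eq_zero (hA : A.PosSemidef) (hoff : ∀ i j, i ≠ j → A i j ≤ 0)
    {u : ι → ℝ} (hu : A *ᵥ u = 0) : A *ᵥ |u| = 0 := by
  refine (hA.dotProduct_mulVec_zero_iff |u|).mp (le_antisymm ?_ ?_)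
  · simpa [hu] using abs_dotProduct_mulVec_abs_le hoff u
  · simpa using hA.dotProduct_mulVec_nonneg |u|

theorem pos_of_mulVec_eq_zero (hneg : ∀ i j, i ≠ j → A i j < 0) {v : ι → ℝ} (hv_nonneg : 0 ≤ v)
    (hv_ne : v ≠ 0) (hAv : A *ᵥ v = 0) (i : ι) : 0 < v i := by
  by_contra! hvi_nonpos
  have hvi : v i = 0 := le_antisymm hvi_nonpos (hv_nonneg i)
  refine hv_ne ?_
  have hterm : ∀ j ∈ Finset.univ, A i j * v j ≤ 0 := fun j _ => by
    rcases eq_or_ne i j with rfl | hij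
    · rw [hvi, mul_zero]
    · exact mul_nonpos_of_nonpos_of_nonneg (hneg i j hij).le (hv_nonneg j)
  have hrow : ∑ j, A i j * v j = 0 := congrFun hAv i
  have hzero := (Finset.sum_eq_zero_iff_of_nonpos hterm).mp hrow
  funext j
  rcases eq_or_ne i j with rfl | hij
  · exact hvi
  · exact (mul_eq_zero.mp (hzero j (Finset.mem_univ j))).resolve_left (hneg i j hij).ne

theorem not_exists_mulVec_eq_of_pos [Nonempty ι] (hA : A.IsSymm) {v w : ι → ℝ}
    (hv : ∀ i, 0 < v i) (hAv : A *ᵥ v = 0) (hw : ∀ i, 0 < w i) : ¬ ∃ x, A *ᵥ x = w := by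
  rintro ⟨x, rfl⟩
  have hpos : 0 < v ⬝ᵥ A *ᵥ x :=
    Finset.sum_pos (fun i _ => mul_pos (hv i) (hw i)) Finset.univ_nonempty
  exact hpos.ne' (hA.dotProduct_mulVec_eq_zero hAv x)

end Matrix

/-- If `A ⪰ 0` has all off-diagonal entries negative and
`rank A = n − 1`, then the null space of `A` is spanned by a vector with all entries
positive, and no vector with all entries positive lies in the range of `A`. -/
theorem stmt17 (n : ℕ) (A : Matrix (Fin n) (Fin n) ℝ) (hA : A.PosSemidef)
    (hneg : ∀ i j, i ≠ j → A i j < 0) (hrank : A.rank + 1 = n) :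
    (∃ v : Fin n → ℝ, (∀ i, 0 < v i) ∧ A.mulVec v = 0 ∧
      ∀ u : Fin n → ℝ, A.mulVec u = 0 → ∃ c : ℝ, u = c • v) ∧
    ∀ w : Fin n → ℝ, (∀ i, 0 < w i) → ¬ ∃ x : Fin n → ℝ, A.mulVec x = w := by
  have hker : Module.finrank ℝ (LinearMap.ker A.mulVecLin) = 1 := by
    have := A.rank_add_finrank_ker_mulVecLin
    rw [Fintype.card_fin] at this
    omega
  obtain ⟨u, hu, hu0⟩ : ∃ u ∈ LinearMap.ker A.mulVecLin, u ≠ 0 :=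
    Submodule.exists_mem_ne_zero_of_ne_bot fun h => by rw [h, finrank_bot] at hker; omega
  have hoff : ∀ i j, i ≠ j → A i j ≤ 0 := fun i j hij => (hneg i j hij).le
  have hAv : A *ᵥ |u| = 0 := hA.mulVec_abs_eq_zero hoff hu
  have hv0 : |u| ≠ 0 := by rwa [Ne, Pi.abs_eq_zero]
  have hpos : ∀ i, 0 < |u| i := pos_of_mulVec_eq_zero hneg (abs_nonneg u) hv0 hAv
  have hspan : LinearMap.ker A.mulVecLin = ℝ ∙ |u| :=
    eq_span_singleton_of_mem_of_finrank_eq_one hker hAv hv0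
  have : Nonempty (Fin n) := ⟨⟨0, by omega⟩⟩
  refine ⟨⟨|u|, hpos, hAv, fun u' hu' => ?_⟩, fun w hw => ?_⟩
  · obtain ⟨c, hc⟩ := Submodule.mem_span_singleton.mp (hspan ▸ hu' : u' ∈ ℝ ∙ |u|)
    exact ⟨c, hc.symm⟩
  · exact not_exists_mulVec_eq_of_pos (isHermitian_iff_isSymm.mp hA.1) hpos hAv hw
end
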